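/- arXiv:2512.05655 — 3 statements merged into one kernel-verified Lean document; each statement's English description precedes it below -/
import Mathlib

section
/- For every x ≥ e, the unique nonnegative real number w satisfying w·e^w = x obeys the bounds ln x − ln(ln x) ≤ w ≤ ln x − (1/2)·ln(ln x). -/
open Real

/-- `t * exp t` is monotone on `[0, ∞)`: comparison lemma. -/
lemma mul_exp_le_mul_exp_imp (a b : ℝ) (ha : 0 ≤ a) (h : a * Real.exp a ≤ b * Real.exp b) :
    a ≤ b := by
  by_contra hab
  push_neg at hab
  have h1 : Real.exp b < Real.exp a := Real.exp_lt_exp.mpr hab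
  have h2 : (0:ℝ) < Real.exp b := Real.exp_pos b
  rcases le_or_gt 0 b with hb | hb
  · have ha0 : 0 < a := lt_of_le_of_lt hb hab
    nlinarith
  · have h3 : b * Real.exp b < 0 := mul_neg_of_neg_of_pos hb h2
    have h4 : 0 ≤ a * Real.exp a := mul_nonneg ha (Real.exp_pos a).le
    linarith

/-- For every x ≥ e, the unique nonnegative real w with w·e^w = x satisfies
    ln x − ln(ln x) ≤ w ≤ ln x − (1/2)·ln(ln x). -/
theorem lambertW_log_bounds (x w : ℝ) (hx : Real.exp 1 ≤ x)
    (hw0 : 0 ≤ w) (hw : w * Real.exp w = x) :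
    Real.log x - Real.log (Real.log x) ≤ w ∧
    w ≤ Real.log x - (1 / 2) * Real.log (Real.log x) := by
  have hx0 : 0 < x := lt_of_lt_of_le (Real.exp_pos 1) hx
  set L := Real.log x with hL
  have hL1 : 1 ≤ L := by
    have := Real.log_le_log (Real.exp_pos 1) hx
    simpa [Real.log_exp] using this
  have hL0 : 0 < L := lt_of_lt_of_le one_pos hL1
  have hexpL : Real.exp L = x := Real.exp_log hx0
  set l := Real.log L with hl
  have hl0 : 0 ≤ l := Real.log_nonneg hL1
  have hexpl : Real.exp l = L := Real.exp_log hL0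
  -- E = exp(l/2), E² = L, E ≥ 1, log E = l/2
  set E := Real.exp (l / 2) with hE
  have hE2 : E * E = L := by
    rw [hE, ← Real.exp_add, show l/2 + l/2 = l by ring, hexpl]
  have hE1 : 1 ≤ E := by
    rw [hE, ← Real.exp_zero]
    exact Real.exp_le_exp.mpr (by linarith)
  have hE0 : 0 < E := lt_of_lt_of_le one_pos hE1
  constructor
  · -- lower bound: (L - l) * exp (L - l) ≤ x = w * exp w
    have hLl0 : 0 ≤ L - l := by
      have : l ≤ L - 1 ∨ l ≤ 0 := Or.inl (by
        have := Real.log_le_sub_one_of_pos hL0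
        linarith)
      rcases this with h | h <;> linarith
    have key : (L - l) * Real.exp (L - l) ≤ w * Real.exp w := by
      rw [hw, Real.exp_sub, hexpL, hexpl]
      rw [div_eq_mul_inv, ← mul_assoc]
      have hLinv : 0 < L⁻¹ := inv_pos.mpr hL0
      calc (L - l) * x * L⁻¹ ≤ L * x * L⁻¹ :=
            mul_le_mul_of_nonneg_right (by nlinarith) hLinv.le
        _ = x := by field_simp
    exact mul_exp_le_mul_exp_imp _ _ hLl0 key
  · -- upper bound: w * exp w = x ≤ u * exp u with u = L - l/2
    have hlogE : Real.log E = l / 2 := by rw [hE, Real.log_exp]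
    have hu : 1 ≤ L - (1/2) * l := by nlinarith [Real.log_le_sub_one_of_pos hE0, sq_nonneg (E - 1)]
    have key : w * Real.exp w ≤ (L - (1/2) * l) * Real.exp (L - (1/2) * l) := by
      rw [hw, show L - (1/2) * l = L - l/2 by ring, Real.exp_sub, hexpL, ← hE]
      have hEle : E ≤ L - l/2 := by
        nlinarith [Real.log_le_sub_one_of_pos hE0, sq_nonneg (E - 1)]
      have hxE : E * (x / E) = x := by field_simp
      have hdiv : 0 ≤ x / E := (div_pos hx0 hE0).le
      nlinarith [mul_le_mul_of_nonneg_right hEle hdiv]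
    linarith [mul_exp_le_mul_exp_imp w (L - (1/2) * l) hw0 key]
end

section
/- For every τ > 0 and σ > 1 there exists a constant C > 0 such that M_{p+q} ≤ C^{p^σ + q^σ} · M'_p · M'_q for all integers p, q ≥ 0, where M_p = p^{τ·p^σ} and M'_p = p^{τ·2^{σ−1}·p^σ} (with M_0 = M'_0 = 1). -/
open Real

lemma ext_gevrey_conv {σ : ℝ} (hσ : 1 ≤ σ) {x y : ℝ} (hx : 0 ≤ x) (hy : 0 ≤ y) :
    (x + y) ^ σ ≤ 2 ^ (σ - 1) * (x ^ σ + y ^ σ) := by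
  have h := (convexOn_rpow hσ).2 (Set.mem_Ici.2 hx) (Set.mem_Ici.2 hy)
    (by norm_num : (0:ℝ) ≤ 1/2) (by norm_num : (0:ℝ) ≤ 1/2) (by norm_num)
  simp only [smul_eq_mul] at h
  have h2 : (x + y) ^ σ = 2 ^ σ * ((1/2) * x + (1/2) * y) ^ σ := by
    rw [← Real.mul_rpow (by norm_num) (by positivity)]
    ring_nf
  have h3 : (2:ℝ) ^ (σ - 1) = 2 ^ σ / 2 := by
    rw [Real.rpow_sub (by norm_num), Real.rpow_one]
  rw [h2, h3]
  have h4 : (0:ℝ) < 2 ^ σ := Real.rpow_pos_of_pos (by norm_num) σ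
  nlinarith [h4]

lemma ext_gevrey_key (τ σ : ℝ) (hτ : 0 < τ) (hσ : 1 < σ) {x y : ℝ} (hx : 1 ≤ x)
    (hxy : x ≤ y) :
    τ * (x + y) ^ σ * Real.log (x + y) ≤
      (τ * 2 ^ (σ - 1) * (Real.log 2 + 1 / (σ - 1))) * (x ^ σ + y ^ σ) +
      τ * 2 ^ (σ - 1) * x ^ σ * Real.log x + τ * 2 ^ (σ - 1) * y ^ σ * Real.log y := by
  have hy : 1 ≤ y := hx.trans hxy
  have hx0 : 0 < x := lt_of_lt_of_le one_pos hx
  have hy0 : 0 < y := lt_of_lt_of_le one_pos hy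
  have hσ1 : 0 < σ - 1 := by linarith
  have h2p : (0:ℝ) < 2 ^ (σ - 1) := Real.rpow_pos_of_pos (by norm_num) _
  have hlogx : 0 ≤ Real.log x := Real.log_nonneg hx
  have hlogy : 0 ≤ Real.log y := Real.log_nonneg hy
  have hxσ : 0 < x ^ σ := Real.rpow_pos_of_pos hx0 σ
  have hyσ : 0 < y ^ σ := Real.rpow_pos_of_pos hy0 σ
  -- convexity bound
  have hconv : (x + y) ^ σ ≤ 2 ^ (σ - 1) * (x ^ σ + y ^ σ) :=
    ext_gevrey_conv hσ.le (by linarith) (by linarith)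
  -- log bound
  have hlog : Real.log (x + y) ≤ Real.log 2 + Real.log y := by
    rw [← Real.log_mul (by norm_num) (ne_of_gt hy0)]
    exact Real.log_le_log (by linarith) (by linarith)
  have hlogadd : 0 ≤ Real.log (x + y) := Real.log_nonneg (by linarith)
  -- step 1: τ (x+y)^σ log(x+y) ≤ τ 2^{σ-1}(x^σ+y^σ)(log 2 + log y)
  have step1 : τ * (x + y) ^ σ * Real.log (x + y) ≤
      τ * (2 ^ (σ - 1) * (x ^ σ + y ^ σ)) * (Real.log 2 + Real.log y) := by
    have := mul_le_mul hconv hlog hlogadd (by positivity)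
    nlinarith [this]
  -- x^σ log y ≤ x^σ log x + (x^σ + y^σ)/(σ-1)
  have step2 : x ^ σ * Real.log y ≤ x ^ σ * Real.log x + (x ^ σ + y ^ σ) / (σ - 1) := by
    have hdiv : Real.log y - Real.log x = Real.log (y / x) := (Real.log_div (ne_of_gt hy0) (ne_of_gt hx0)).symm
    have h1 : Real.log (y / x) ≤ (y / x) ^ (σ - 1) / (σ - 1) :=
      Real.log_le_rpow_div (by positivity) hσ1
    have hxs : x ^ σ = x ^ (σ - 1) * x := by
      rw [← Real.rpow_add_one (ne_of_gt hx0)]; congr 1; ring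
    have hys : y ^ σ = y ^ (σ - 1) * y := by
      rw [← Real.rpow_add_one (ne_of_gt hy0)]; congr 1; ring
    have h2 : x ^ σ * (y / x) ^ (σ - 1) = x * y ^ (σ - 1) := by
      rw [Real.div_rpow hy0.le hx0.le, hxs]
      have hxp : (0:ℝ) < x ^ (σ - 1) := Real.rpow_pos_of_pos hx0 _
      field_simp
    have h3 : x * y ^ (σ - 1) ≤ y ^ σ := by
      have hyp : (0:ℝ) < y ^ (σ - 1) := Real.rpow_pos_of_pos hy0 _
      nlinarith [hys]
    have h4 : x ^ σ * Real.log (y / x) ≤ (x ^ σ + y ^ σ) / (σ - 1) := by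
      calc x ^ σ * Real.log (y / x) ≤ x ^ σ * ((y / x) ^ (σ - 1) / (σ - 1)) := by
            exact mul_le_mul_of_nonneg_left h1 hxσ.le
        _ = x ^ σ * (y / x) ^ (σ - 1) / (σ - 1) := by ring
        _ = x * y ^ (σ - 1) / (σ - 1) := by rw [h2]
        _ ≤ (x ^ σ + y ^ σ) / (σ - 1) := by
            gcongr
            nlinarith [h3, hxσ]
    nlinarith [h4, hdiv]
  -- combine
  have hK : 0 < τ * 2 ^ (σ - 1) := by positivity
  calc τ * (x + y) ^ σ * Real.log (x + y)
      ≤ τ * (2 ^ (σ - 1) * (x ^ σ + y ^ σ)) * (Real.log 2 + Real.log y) := step1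
    _ = τ * 2 ^ (σ - 1) * ((x ^ σ + y ^ σ) * Real.log 2) +
        τ * 2 ^ (σ - 1) * (x ^ σ * Real.log y) +
        τ * 2 ^ (σ - 1) * (y ^ σ * Real.log y) := by ring
    _ ≤ τ * 2 ^ (σ - 1) * ((x ^ σ + y ^ σ) * Real.log 2) +
        τ * 2 ^ (σ - 1) * (x ^ σ * Real.log x + (x ^ σ + y ^ σ) / (σ - 1)) +
        τ * 2 ^ (σ - 1) * (y ^ σ * Real.log y) := by
          gcongr
    _ = (τ * 2 ^ (σ - 1) * (Real.log 2 + 1 / (σ - 1))) * (x ^ σ + y ^ σ) +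
        τ * 2 ^ (σ - 1) * x ^ σ * Real.log x + τ * 2 ^ (σ - 1) * y ^ σ * Real.log y := by
          field_simp
          ring

/-- For every τ > 0 and σ > 1 there is C > 0 such that
    M_{p+q} ≤ C^{p^σ+q^σ}·M'_p·M'_q for all p, q ≥ 0, where
    M_p = p^{τ·p^σ} and M'_p = p^{τ·2^{σ−1}·p^σ} (M_0 = M'_0 = 1). -/
theorem extended_gevrey_M2tilde (τ σ : ℝ) (hτ : 0 < τ) (hσ : 1 < σ) :
    ∃ C : ℝ, 0 < C ∧ ∀ p q : ℕ,
      (fun r : ℕ => if r = 0 then (1 : ℝ)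
        else Real.exp (τ * (r : ℝ) ^ σ * Real.log r)) (p + q) ≤
      C ^ ((p : ℝ) ^ σ + (q : ℝ) ^ σ) *
      ((fun r : ℕ => if r = 0 then (1 : ℝ)
        else Real.exp (τ * (2 : ℝ) ^ (σ - 1) * (r : ℝ) ^ σ * Real.log r)) p *
       (fun r : ℕ => if r = 0 then (1 : ℝ)
        else Real.exp (τ * (2 : ℝ) ^ (σ - 1) * (r : ℝ) ^ σ * Real.log r)) q) := by
  have hσ1 : 0 < σ - 1 := by linarith
  have h2p : (0:ℝ) < 2 ^ (σ - 1) := Real.rpow_pos_of_pos (by norm_num) _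
  have h2p1 : (1:ℝ) ≤ 2 ^ (σ - 1) := Real.one_le_rpow (by norm_num) hσ1.le
  set K : ℝ := τ * 2 ^ (σ - 1) * (Real.log 2 + 1 / (σ - 1)) with hKdef
  have hK : 0 < K := by
    have : 0 < Real.log 2 := Real.log_pos (by norm_num)
    have : 0 < Real.log 2 + 1 / (σ - 1) := by positivity
    positivity
  refine ⟨Real.exp K, Real.exp_pos K, ?_⟩
  have hCpow : ∀ r : ℝ, (Real.exp K) ^ r = Real.exp (K * r) := by
    intro r
    rw [Real.rpow_def_of_pos (Real.exp_pos K), Real.log_exp]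
  -- the main two-variable bound for 1 ≤ p, 1 ≤ q
  have main : ∀ p q : ℕ, p ≠ 0 → q ≠ 0 →
      Real.exp (τ * ((p:ℝ) + q) ^ σ * Real.log ((p:ℝ) + q)) ≤
      Real.exp K ^ ((p : ℝ) ^ σ + (q : ℝ) ^ σ) *
      (Real.exp (τ * 2 ^ (σ - 1) * (p:ℝ) ^ σ * Real.log p) *
       Real.exp (τ * 2 ^ (σ - 1) * (q:ℝ) ^ σ * Real.log q)) := by
    intro p q hp hq
    have hp1 : (1:ℝ) ≤ p := by exact_mod_cast Nat.one_le_iff_ne_zero.2 hp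
    have hq1 : (1:ℝ) ≤ q := by exact_mod_cast Nat.one_le_iff_ne_zero.2 hq
    rw [hCpow, ← Real.exp_add, ← Real.exp_add, Real.exp_le_exp]
    rcases le_total (p:ℝ) (q:ℝ) with h | h
    · have := ext_gevrey_key τ σ hτ hσ hp1 h
      rw [hKdef]
      linarith
    · have := ext_gevrey_key τ σ hτ hσ hq1 h
      rw [add_comm (q:ℝ) (p:ℝ)] at this
      rw [hKdef]
      linarith
  intro p q
  simp only
  rcases Nat.eq_zero_or_pos p with hp | hp
  · rcases Nat.eq_zero_or_pos q with hq | hq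
    · subst hp; subst hq
      simp [hCpow, Real.zero_rpow (ne_of_gt (show (0:ℝ) < σ by linarith))]
    · subst hp
      have hq0 : q ≠ 0 := Nat.pos_iff_ne_zero.mp hq
      simp only [Nat.zero_add, hq0, if_false, if_true, Nat.cast_zero]
      rw [Real.zero_rpow (ne_of_gt (show (0:ℝ) < σ by linarith)), zero_add, hCpow, one_mul, ← Real.exp_add,
        Real.exp_le_exp]
      have hq1 : (1:ℝ) ≤ q := by exact_mod_cast Nat.one_le_iff_ne_zero.2 hq0
      have hlq : 0 ≤ Real.log q := Real.log_nonneg hq1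
      have hqσ : 0 < (q:ℝ) ^ σ := Real.rpow_pos_of_pos (by linarith) σ
      nlinarith [mul_le_mul_of_nonneg_right (mul_le_mul_of_nonneg_left h2p1 hτ.le)
        (mul_nonneg hqσ.le hlq)]
  · rcases Nat.eq_zero_or_pos q with hq | hq
    · subst hq
      have hp0 : p ≠ 0 := Nat.pos_iff_ne_zero.mp hp
      simp only [Nat.add_zero, hp0, if_false, if_true, Nat.cast_zero]
      rw [Real.zero_rpow (ne_of_gt (show (0:ℝ) < σ by linarith)), add_zero, hCpow, mul_one, ← Real.exp_add,
        Real.exp_le_exp]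
      have hp1 : (1:ℝ) ≤ p := by exact_mod_cast Nat.one_le_iff_ne_zero.2 hp0
      have hlp : 0 ≤ Real.log p := Real.log_nonneg hp1
      have hpσ : 0 < (p:ℝ) ^ σ := Real.rpow_pos_of_pos (by linarith) σ
      nlinarith [mul_le_mul_of_nonneg_right (mul_le_mul_of_nonneg_left h2p1 hτ.le)
        (mul_nonneg hpσ.le hlp)]
    · have hp0 : p ≠ 0 := Nat.pos_iff_ne_zero.mp hp
      have hq0 : q ≠ 0 := Nat.pos_iff_ne_zero.mp hq
      have hpq0 : p + q ≠ 0 := by omega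
      simp only [hp0, hq0, hpq0, if_false]
      have := main p q hp0 hq0
      push_cast at this ⊢
      exact this
end

section
/- For fixed x > 0 and ρ > 0, the map σ ↦ exp(−ρ·g_σ(x)) on (1, ∞) is increasing in σ, where g_σ(x) = (ln(1+x))^{σ/(σ−1)} / W(ln(1+x))^{1/(σ−1)}; equivalently, σ ↦ g_σ(x) is decreasing on (1, ∞). -/
open Real

/-!
Since `e^w ≥ 1`, the relation `W(t) e^{W(t)} = t` gives `W(t) ≤ t`. Writing `t = ln(1+x)`,
`g_σ(x) = t · (t / W(t))^{1/(σ-1)}` is a power of a base `≥ 1` whose exponent decreases in `σ`.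
-/

lemma le_of_mul_exp_eq {w t : ℝ} (hw : 0 ≤ w) (h : w * exp w = t) : w ≤ t :=
  h ▸ le_mul_of_one_le_right hw (one_le_exp hw)

lemma pos_of_mul_exp_pos {w : ℝ} (h : 0 < w * exp w) : 0 < w :=
  (mul_pos_iff_of_pos_right (exp_pos w)).mp h

lemma rpow_div_sub_one_div_rpow_eq_mul {t w σ : ℝ} (ht : 0 < t) (hw : 0 ≤ w) (hσ : σ ≠ 1) :
    t ^ (σ / (σ - 1)) / w ^ (1 / (σ - 1)) = t * (t / w) ^ (1 / (σ - 1)) := by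
  have hexp : σ / (σ - 1) = 1 + 1 / (σ - 1) := by
    field_simp [sub_ne_zero.mpr hσ]
    ring
  rw [hexp, rpow_add ht, rpow_one, div_rpow ht.le hw, mul_div_assoc]

lemma antitoneOn_rpow_div_sub_one_div_rpow {t w : ℝ} (hw : 0 < w) (hwt : w ≤ t) :
    AntitoneOn (fun σ : ℝ => t ^ (σ / (σ - 1)) / w ^ (1 / (σ - 1))) (Set.Ioi 1) := by
  intro σ₁ (h₁ : 1 < σ₁) σ₂ (h₂ : 1 < σ₂) h₁₂
  have ht : 0 < t := hw.trans_le hwt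
  dsimp only
  rw [rpow_div_sub_one_div_rpow_eq_mul ht hw.le h₁.ne',
    rpow_div_sub_one_div_rpow_eq_mul ht hw.le h₂.ne']
  have hbase : 1 ≤ t / w := (one_le_div hw).mpr hwt
  have hexpo : 1 / (σ₂ - 1) ≤ 1 / (σ₁ - 1) :=
    one_div_le_one_div_of_le (by linarith) (by linarith)
  exact mul_le_mul_of_nonneg_left (rpow_le_rpow_of_exponent_le hbase hexpo) ht.le

/-- For fixed x > 0 and ρ > 0, σ ↦ exp(−ρ·g_σ(x)) is increasing on (1, ∞);
    equivalently σ ↦ g_σ(x) is decreasing, where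
    g_σ(x) = (ln(1+x))^{σ/(σ−1)}/W(ln(1+x))^{1/(σ−1)}. -/
theorem f_rho_sigma_mono_in_sigma (x ρ : ℝ) (hx : 0 < x) (hρ : 0 < ρ)
    (W : ℝ → ℝ)
    (hW : ∀ t : ℝ, 0 ≤ t → 0 ≤ W t ∧ W t * Real.exp (W t) = t) :
    ∀ σ₁ σ₂ : ℝ, 1 < σ₁ → σ₁ ≤ σ₂ →
      (Real.log (1 + x) ^ (σ₂ / (σ₂ - 1)) / W (Real.log (1 + x)) ^ (1 / (σ₂ - 1)) ≤
        Real.log (1 + x) ^ (σ₁ / (σ₁ - 1)) / W (Real.log (1 + x)) ^ (1 / (σ₁ - 1))) ∧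
      (Real.exp (-ρ * (Real.log (1 + x) ^ (σ₁ / (σ₁ - 1)) /
          W (Real.log (1 + x)) ^ (1 / (σ₁ - 1)))) ≤
        Real.exp (-ρ * (Real.log (1 + x) ^ (σ₂ / (σ₂ - 1)) /
          W (Real.log (1 + x)) ^ (1 / (σ₂ - 1))))) := by
  intro σ₁ σ₂ h₁ h₁₂
  have ht : 0 < log (1 + x) := log_pos (by linarith)
  obtain ⟨hW₀, hWexp⟩ := hW _ ht.le
  have hg := antitoneOn_rpow_div_sub_one_div_rpow (pos_of_mul_exp_pos (hWexp.symm ▸ ht))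
    (le_of_mul_exp_eq hW₀ hWexp) h₁ (h₁.trans_le h₁₂) h₁₂
  exact ⟨hg, exp_le_exp.mpr (mul_le_mul_of_nonpos_left hg (by linarith))⟩
end
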